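/- A selfish miner's relative revenue is positively correlated with the private-chain length cap N: with γ1 = γ2 = 1/2, θ1 = θ2 = 1/3 and symmetric selfish Hashrates α1 = α2 = α, for every α with 0.21 < α < 1/3 the N=4 relative revenue exceeds the N=2 relative revenue, i.e. R_A⁴(α,α) > R_A(α,α). -/

import Mathlib

/-!
At the symmetric point both relative revenues are explicit rational functions of `α`:
`R_A = a(α) / (6(1 + 2α))` and `R_A⁴ = b(α) / (6 S(α))`. Cross-multiplying, the gap
`b(α)(1 + 2α) - a(α) S(α)` factors as `α³ (1 - 2α) q(α)` with `q` positive on `[0, 1/2]`,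
so `R_A⁴ > R_A` on the whole range `0 < α < 1/2` of symmetric hashrates.
-/

/-- N=2 selfish-mining model: Alice's valid-block rate. -/
noncomputable def R1N2 (a1 a2 g1 g2 t1 t2 : ℝ) : ℝ :=
  let h := 1 - a1 - a2
  (2*a1^2*(1+h) + (a2+h)*a1*h*g1 + a1*a2*h + 4*a1^2*a2*(1+h) + 2*a1*a2*h^2*t1)
    / (1 + a1 + a2 + a1*h + 2*a1*a2 + a2*h + 2*a1*a2*h)

/-- N=2 selfish-mining model: Bob's valid-block rate. -/
noncomputable def R2N2 (a1 a2 g1 g2 t1 t2 : ℝ) : ℝ :=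
  let h := 1 - a1 - a2
  (2*a2^2*(1+h) + (a1+h)*h*a2*g2 + a1*a2*h + 4*a2^2*a1*(1+h) + 2*a1*a2*h^2*t2)
    / (1 + a1 + a2 + a1*h + 2*a1*a2 + a2*h + 2*a1*a2*h)

/-- N=2 selfish-mining model: Henry's valid-block rate. -/
noncomputable def RhN2 (a1 a2 g1 g2 t1 t2 : ℝ) : ℝ :=
  let h := 1 - a1 - a2
  (h + a1*h^2*(2-g1) + a2*h^2*(2-g2) + 2*a1*a2*h^2*(2-t1-t2) + a1*a2*h*(2-g1-g2))
    / (1 + a1 + a2 + a1*h + 2*a1*a2 + a2*h + 2*a1*a2*h)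

/-- N=2 model: Alice's relative revenue R_A. -/
noncomputable def RA2 (a1 a2 g1 g2 t1 t2 : ℝ) : ℝ :=
  R1N2 a1 a2 g1 g2 t1 t2 /
    (R1N2 a1 a2 g1 g2 t1 t2 + R2N2 a1 a2 g1 g2 t1 t2 + RhN2 a1 a2 g1 g2 t1 t2)

/-- N=2 model: Bob's relative revenue R_B. -/
noncomputable def RB2 (a1 a2 g1 g2 t1 t2 : ℝ) : ℝ :=
  R2N2 a1 a2 g1 g2 t1 t2 /
    (R1N2 a1 a2 g1 g2 t1 t2 + R2N2 a1 a2 g1 g2 t1 t2 + RhN2 a1 a2 g1 g2 t1 t2)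

/-- N=4 selfish-mining model: Alice's (unnormalized) revenue polynomial S1. -/
noncomputable def S1N4 (a1 a2 g1 g2 t1 t2 : ℝ) : ℝ :=
  let h := 1 - a1 - a2
  let b1 := g1 / (g1 + g2)
  4*a1^4*(1+h) + 3*a1^3*h^2 + 16*a1^4*a2 + 4*a1^2*h + 40*a1^4*a2^2*(1+2*a2)
  + a1*a2*h*(1+g1+2*t1*h) + 10*a1^2*a2*h + 20*a1^3*a2*h*(3*a2+a1) + 15*a1^3*a2*h^2
  + 4*a1^4*a2^2*h*(1+h) + 4*a1^4*a2^3*h^2*(b1+20) + 5*a1^5*a2^3*h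
  + 4*a1^4*a2^3*h*(a2+21) + 3*a1^3*a2^4*h^2*b1 + a1*h^2*g1 + 12*a1^2*a2^2*h^2*b1
  + a1^2*a2^2*h^3*b1*(3*a1+2*a2) + 6*a1^3*a2^3*h^2*(10*h*b1+1)

/-- N=4 selfish-mining model: Bob's (unnormalized) revenue polynomial S2. -/
noncomputable def S2N4 (a1 a2 g1 g2 t1 t2 : ℝ) : ℝ :=
  let h := 1 - a1 - a2
  let b2 := g2 / (g1 + g2)
  4*a2^4*(1+h) + 3*a2^3*h^2 + 16*a1*a2^4 + 4*a2^2*h + 40*a1^2*a2^4*(1+2*a1)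
  + a1*a2*h*(1+g2+2*t2*h) + 10*a1*a2^2*h + 20*a1*a2^3*h*(3*a1+a2) + 15*a1*a2^3*h^2
  + 4*a1^2*a2^4*h*(1+h) + 4*a1^3*a2^4*h^2*(b2+20) + 5*a1^3*a2^5*h
  + 4*a1^3*a2^4*h*(a1+21) + 3*a1^4*a2^3*h^2*b2 + a2*h^2*g2 + 12*a1^2*a2^2*h^2*b2
  + a1^2*a2^2*h^3*b2*(2*a1+3*a2) + 6*a1^3*a2^3*h^2*(10*h*b2+1)

/-- N=4 selfish-mining model: Henry's (unnormalized) revenue polynomial Sh. -/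
noncomputable def ShN4 (a1 a2 g1 g2 t1 t2 : ℝ) : ℝ :=
  let h := 1 - a1 - a2
  let b1 := g1 / (g1 + g2)
  let b2 := g2 / (g1 + g2)
  h + a1*h^2*(2-g1) + a2*h^2*(2-g2) + 2*a1*a2*h^2*(2-t1-t2) + a1*a2*h*(2-g1-g2)
  + a1^2*a2^2*h^2*(6+4*a1*a2) + a1^2*a2^3*h^3*(2*b1+b2) + a1^3*a2^2*h^3*(b1+2*b2)
  + a1^3*a2^3*h*(a1+a2) + a1^3*a2^4*h^2*(2*b1+b2) + a1^4*a2^3*h^2*(b1+2*b2)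
  + 20*a1^3*a2^3*h^3 + 2*a1^4*a2^4*h

/-- N=4 model: Alice's relative revenue R_A⁴. -/
noncomputable def RA4 (a1 a2 g1 g2 t1 t2 : ℝ) : ℝ :=
  S1N4 a1 a2 g1 g2 t1 t2 /
    (S1N4 a1 a2 g1 g2 t1 t2 + S2N4 a1 a2 g1 g2 t1 t2 + ShN4 a1 a2 g1 g2 t1 t2)

/-- N=4 model: Bob's relative revenue R_B⁴. -/
noncomputable def RB4 (a1 a2 g1 g2 t1 t2 : ℝ) : ℝ :=
  S2N4 a1 a2 g1 g2 t1 t2 /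
    (S1N4 a1 a2 g1 g2 t1 t2 + S2N4 a1 a2 g1 g2 t1 t2 + ShN4 a1 a2 g1 g2 t1 t2)

lemma RA2_symm {α : ℝ} (h0 : 0 ≤ α) (h1 : α ≤ 1) :
    RA2 α α (1/2) (1/2) (1/3) (1/3)
      = (3*α + 25*α^2 + 2*α^3 - 32*α^4) / (6 * (1 + 2*α)) := by
  have hD : 1 + α + α + α*(1-α-α) + 2*α*α + α*(1-α-α) + 2*α*α*(1-α-α) ≠ 0 := by
    nlinarith [mul_nonneg h0 (mul_nonneg h0 (sub_nonneg.2 h1))]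
  unfold RA2 R1N2 R2N2 RhN2
  dsimp only
  -- the three numerators sum to `1 + 2α`
  rw [← add_div, ← add_div, div_div_div_cancel_right₀ hD,
    div_eq_div_iff (by ring_nf; positivity) (by positivity)]
  ring

lemma RA4_symm (α : ℝ) :
    RA4 α α (1/2) (1/2) (1/3) (1/3)
      = (3*α + 25*α^2 + 8*α^3 - 2*α^4 + 111*α^5 - 42*α^6 + 297*α^7 - 678*α^8 + 456*α^9)
        / (6 * (1 + 2*α + 2*α^3 + 16*α^4 + 16*α^5 + 16*α^6 + 4*α^7 - 8*α^8)) := by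
  unfold RA4
  rw [← mul_div_mul_left _ _ (by norm_num : (6:ℝ) ≠ 0)]
  unfold S1N4 S2N4 ShN4
  congr 1 <;> norm_num <;> ring

lemma gap_factor_pos {α : ℝ} (h0 : 0 ≤ α) (h1 : α ≤ 1/2) :
    0 < 6 + 48*α + 169*α^2 + 66*α^3 - 71*α^4 - 158*α^5 - 812*α^6 - 8*α^7 + 128*α^8 := by
  -- for `α² ≤ 1/4` the negative terms total at most `88.5 α² < 169 α²`
  have hsq : α^2 ≤ 1/4 := by nlinarith
  nlinarith [pow_nonneg h0 3, pow_nonneg h0 4, pow_nonneg h0 5, pow_nonneg h0 8,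
    mul_nonneg (pow_nonneg h0 2) (sub_nonneg.2 hsq)]

lemma RA2_symm_lt_RA4_symm {α : ℝ} (h0 : 0 < α) (h1 : α < 1/2) :
    RA2 α α (1/2) (1/2) (1/3) (1/3) < RA4 α α (1/2) (1/2) (1/3) (1/3) := by
  have hS : 0 < 1 + 2*α + 2*α^3 + 16*α^4 + 16*α^5 + 16*α^6 + 4*α^7 - 8*α^8 := by
    have : 8*α^8 ≤ 4*α^7 := by nlinarith [pow_pos h0 7]
    nlinarith [pow_pos h0 3, pow_pos h0 4, pow_pos h0 5, pow_pos h0 6]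
  rw [RA2_symm h0.le (by linarith), RA4_symm,
    div_lt_div_iff₀ (by positivity) (by positivity)]
  have hgap := mul_pos (mul_pos (pow_pos h0 3) (sub_pos.2 (by linarith : 2*α < 1)))
    (gap_factor_pos h0.le h1.le)
  linear_combination 6 * hgap

theorem revenue_increases_with_N (α : ℝ) (h1 : 0.21 < α) (h2 : α < 1/3) :
    RA4 α α (1/2) (1/2) (1/3) (1/3) > RA2 α α (1/2) (1/2) (1/3) (1/3) :=
  RA2_symm_lt_RA4_symm (by linarith) (by linarith)
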